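/- Let H be a real Hilbert space, b: H×H → ℝ a bilinear form with |b(u,v)| ≤ C_cont‖u‖‖v‖ and b(u,u) ≥ C_coer‖u‖² for all u,v ∈ H, let F ∈ H*, and let U ⊂ H be a closed subspace. If u ∈ H solves b(u,v) = F(v) for all v ∈ H and u^h ∈ U solves b(u^h,v) = F(v) for all v ∈ U, then ‖u - u^h‖ ≤ (C_cont/C_coer) · inf_{w ∈ U} ‖u - w‖ (Cea's Lemma). -/
import Mathlib


/-- **Cea's Lemma.** Let `H` be a real Hilbert space, `b` a bilinear form on `H` that is
continuous with constant `C_cont` and coercive with constant `C_coer > 0`, `F` a continuous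
linear functional, and `U ⊂ H` a closed subspace. If `u` solves `b(u,v) = F(v)` for all
`v ∈ H` and `u^h ∈ U` solves `b(u^h,v) = F(v)` for all `v ∈ U`, then
`‖u - u^h‖ ≤ (C_cont/C_coer) · inf_{w ∈ U} ‖u - w‖`. -/
theorem cea_lemma
    {H : Type*} [NormedAddCommGroup H] [InnerProductSpace ℝ H] [CompleteSpace H]
    (b : H →ₗ[ℝ] H →ₗ[ℝ] ℝ) (Ccont Ccoer : ℝ) (hCcont : 0 < Ccont) (hCcoer : 0 < Ccoer)
    (hcont : ∀ u v : H, |b u v| ≤ Ccont * ‖u‖ * ‖v‖)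
    (hcoer : ∀ u : H, Ccoer * ‖u‖ ^ 2 ≤ b u u)
    (F : H →L[ℝ] ℝ) (U : Submodule ℝ H) (hU : IsClosed (U : Set H))
    (u : H) (hu : ∀ v : H, b u v = F v)
    (uh : H) (huh : uh ∈ U) (huhsol : ∀ v ∈ U, b uh v = F v) :
    ‖u - uh‖ ≤ (Ccont / Ccoer) * ⨅ w : U, ‖u - (w : H)‖ := by
  -- Galerkin orthogonality
  have horth : ∀ v ∈ U, b (u - uh) v = 0 := by
    intro v hv
    simp [map_sub, hu v, huhsol v hv]
  -- key bound for each w ∈ U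
  have key : ∀ w : U, ‖u - uh‖ ≤ (Ccont / Ccoer) * ‖u - (w : H)‖ := by
    intro w
    have h1 : Ccoer * ‖u - uh‖ ^ 2 ≤ b (u - uh) (u - uh) := hcoer _
    have h2 : b (u - uh) (u - uh) = b (u - uh) (u - (w : H)) := by
      have : b (u - uh) ((w : H) - uh) = 0 := horth _ (U.sub_mem w.2 huh)
      have e : (u - uh) = (u - (w : H)) + ((w : H) - uh) := by abel
      calc b (u - uh) (u - uh) = b (u - uh) ((u - (w : H)) + ((w : H) - uh)) := by rw [← e]
        _ = b (u - uh) (u - (w : H)) + b (u - uh) ((w : H) - uh) := by rw [map_add]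
        _ = b (u - uh) (u - (w : H)) := by rw [this, add_zero]
    have h3 : b (u - uh) (u - (w : H)) ≤ Ccont * ‖u - uh‖ * ‖u - (w : H)‖ :=
      le_trans (le_abs_self _) (hcont _ _)
    have h4 : Ccoer * ‖u - uh‖ ^ 2 ≤ Ccont * ‖u - uh‖ * ‖u - (w : H)‖ := by
      rw [h2] at h1; linarith
    rcases eq_or_lt_of_le (norm_nonneg (u - uh)) with h0 | h0
    · rw [← h0]
      positivity
    · rw [div_mul_eq_mul_div, le_div_iff₀ hCcoer]
      nlinarith [norm_nonneg (u - (w : H))]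
  have hne : Nonempty U := ⟨⟨uh, huh⟩⟩
  have hbdd : BddBelow (Set.range fun w : U => ‖u - (w : H)‖) := by
    exact ⟨0, by rintro x ⟨w, rfl⟩; exact norm_nonneg _⟩
  rw [mul_comm, ← div_le_iff₀ (by positivity : (0:ℝ) < Ccont / Ccoer)]
  exact le_ciInf fun w => (div_le_iff₀ (by positivity)).2 (by rw [mul_comm]; exact key w)
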